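/- Let f : ℝ × ℝ → ℝ be a proper nonlinearity such that for every t the function x ↦ f(t,x) is strictly increasing. Then for every continuous 1-periodic v : ℝ → ℝ there exists exactly one periodic solution of u' + f(t,u) = v. -/

import Mathlib

open Filter

/-- A function is 1-periodic if `u (t+1) = u t` for all `t`. -/
def Periodic1 (u : ℝ → ℝ) : Prop := ∀ t, u (t + 1) = u t

/-- A nonlinearity is a smooth function `f : ℝ × ℝ → ℝ` which is 1-periodic
in the first variable. -/
def Nonlinearity (f : ℝ → ℝ → ℝ) : Prop :=
  ContDiff ℝ (⊤ : ℕ∞) (Function.uncurry f) ∧ ∀ t x, f (t + 1) x = f t x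

/-- A nonlinearity is proper if `inf_{t ∈ [0,1]} |f(t,x)| → ∞` as `|x| → ∞`. -/
def ProperNL (f : ℝ → ℝ → ℝ) : Prop :=
  Tendsto (fun x : ℝ => sInf ((fun t => |f t x|) '' Set.Icc (0:ℝ) 1))
    (Filter.comap (fun x : ℝ => |x|) Filter.atTop) Filter.atTop

/-- A periodic solution of `u' + f(t,u) = v`. -/
def IsPeriodicSol (f : ℝ → ℝ → ℝ) (v u : ℝ → ℝ) : Prop :=
  ContDiff ℝ 1 u ∧ Periodic1 u ∧ ∀ t, deriv u t + f t (u t) = v t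

/-!
Existence: clamp the state to a band `[-B, B]` chosen, by properness and monotonicity, so that
`v t - f t B < 0 < v t - f t (-B)`. The field then points into the band, so the time-one map of the
(clamped, globally Lipschitz) flow maps `[-B, B]` continuously into itself and has a fixed point;
the corresponding solution extends to a periodic one. Uniqueness is a maximum principle: `f t` is
strictly increasing, so `u - w` cannot have a positive maximum.
-/

open Set Topology Function Metric
open scoped NNReal

theorem Function.Periodic.apply_fract {α : Type*} {u : ℝ → α} (hu : Periodic u 1) (t : ℝ) :
    u (Int.fract t) = u t := by
  have h := hu.sub_int_mul_eq (x := t) ⌊t⌋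
  rwa [mul_one, Int.self_sub_floor] at h

theorem Function.Periodic.exists_forall_norm_le {E : Type*} [NormedAddCommGroup E] {u : ℝ → E}
    {c : ℝ} (hu : Periodic u c) (hc : c ≠ 0) (hcont : Continuous u) : ∃ C, ∀ t, ‖u t‖ ≤ C := by
  obtain ⟨C, hC⟩ := isBounded_iff_forall_norm_le.1 (hu.isBounded_of_continuous hc hcont)
  exact ⟨C, fun t => hC _ (mem_range_self t)⟩

/-- At a maximum of `u - w` the derivative `g t (u t) - g t (w t)` vanishes, which is impossible
where `u > w`. -/
theorem Function.Periodic.le_of_hasDerivAt_of_strictAnti {g : ℝ → ℝ → ℝ}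
    (hg : ∀ t, StrictAnti (g t)) {u w : ℝ → ℝ} {c : ℝ} (hc : c ≠ 0) (hu_per : Periodic u c)
    (hw_per : Periodic w c) (hu : ∀ t, HasDerivAt u (g t (u t)) t)
    (hw : ∀ t, HasDerivAt w (g t (w t)) t) : u ≤ w := by
  have hcont : Continuous (u - w) :=
    continuous_iff_continuousAt.2 fun t => ((hu t).sub (hw t)).continuousAt
  obtain ⟨_, ⟨t₀, rfl⟩, hmax⟩ :=
    ((hu_per.sub hw_per).compact_of_continuous hc hcont).exists_isGreatest (range_nonempty _)
  have hmax' : ∀ s, u s - w s ≤ u t₀ - w t₀ := fun s => hmax (mem_range_self s)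
  have hcrit : g t₀ (u t₀) - g t₀ (w t₀) = 0 :=
    IsLocalMax.hasDerivAt_eq_zero (Eventually.of_forall hmax') ((hu t₀).sub (hw t₀))
  intro t
  by_contra! hlt
  have := hg t₀ (show w t₀ < u t₀ by linarith [hmax' t])
  linarith

theorem IsPreconnected.forall_lt_of_lt_abs {X : Type*} [TopologicalSpace X] {s : Set X}
    (hs : IsPreconnected s) {φ : X → ℝ} (hφ : ContinuousOn φ s) {C : ℝ} (hC : 0 ≤ C)
    (habs : ∀ x ∈ s, C < |φ x|) {x₀ : X} (hx₀ : x₀ ∈ s) (h₀ : C < φ x₀) : ∀ x ∈ s, C < φ x := by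
  intro x hx
  by_contra! hle
  obtain ⟨y, hy, hyC⟩ := hs.intermediate_value hx hx₀ hφ ⟨hle, h₀.le⟩
  have := habs y hy
  rw [hyC, abs_of_nonneg hC] at this
  exact lt_irrefl _ this

section ODE

variable {E : Type*} [NormedAddCommGroup E] [NormedSpace ℝ E]

theorem exists_flow_of_lipschitzWith [CompleteSpace E] {g : ℝ → E → E} {L : ℝ≥0} {C : ℝ}
    (hlip : ∀ t, LipschitzWith L (g t)) (hcont : ∀ x, Continuous (g · x))
    (hbdd : ∀ t x, ‖g t x‖ ≤ C) (T R : ℝ≥0) :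
    ∃ φ : E → ℝ → E, (∀ x ∈ closedBall (0 : E) R, φ x 0 = x ∧
      ∀ t ∈ Ioo (-T : ℝ) T, HasDerivAt (φ x) (g t (φ x t)) t) ∧
      ∀ t ∈ Ioo (-T : ℝ) T, ContinuousOn (φ · t) (closedBall 0 R) := by
  have hpl : IsPicardLindelof g (tmin := -T) (tmax := T) ⟨0, by simp⟩ 0
      (R + C.toNNReal * T) R C.toNNReal L :=
    { lipschitzOnWith := fun t _ => (hlip t).lipschitzOnWith
      continuousOn := fun x _ => (hcont x).continuousOn
      norm_le := fun t _ x _ => (hbdd t x).trans (Real.le_coe_toNNReal C)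
      mul_max_le := by simp }
  obtain ⟨φ, hφ, _, hφlip⟩ :=
    hpl.exists_forall_mem_closedBall_eq_hasDerivWithinAt_lipschitzOnWith
  refine ⟨φ, fun x hx => ⟨(hφ x hx).1, fun t ht => ?_⟩,
    fun t ht => (hφlip t (Ioo_subset_Icc_self ht)).continuousOn⟩
  exact ((hφ x hx).2 t (Ioo_subset_Icc_self ht)).hasDerivAt (Icc_mem_nhds ht.1 ht.2)

/-- The shifted solution `u (· + 1)` agrees with `u` near `0` by uniqueness. -/
theorem hasDerivAt_comp_fract {g : ℝ → E → E} {L : ℝ≥0} (hlip : ∀ t, LipschitzWith L (g t))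
    (hper : Periodic g 1) {u : ℝ → E} (hu : ∀ t ∈ Ioo (-1 : ℝ) 2, HasDerivAt u (g t (u t)) t)
    (h10 : u 1 = u 0) (t : ℝ) :
    HasDerivAt (fun s => u (Int.fract s)) (g t (u (Int.fract t))) t := by
  have hshift : EqOn (fun s => u (s + 1)) u (Ioo (-1) 1) := by
    refine ODE_solution_unique_of_mem_Ioo (s := fun _ => univ) (fun t _ => (hlip t).lipschitzOnWith)
      (t₀ := 0) (by norm_num) (fun s hs => ⟨?_, trivial⟩)
      (fun s hs => ⟨hu s ⟨hs.1, by linarith [hs.2]⟩, trivial⟩) (by simpa using h10)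
    rw [← hper s]
    exact (hu (s + 1) ⟨by linarith [hs.1], by linarith [hs.2]⟩).comp_add_const s 1
  have hfract : ∀ r ∈ Ioo (-1 : ℝ) 1, u (Int.fract r) = u r := by
    intro r hr
    rcases le_or_gt 0 r with h0 | h0
    · rw [Int.fract_eq_self.2 ⟨h0, hr.2⟩]
    · have : Int.fract r = r + 1 :=
        Int.fract_eq_iff.2 ⟨by linarith [hr.1], by linarith, -1, by simp⟩
      rw [this]
      exact hshift ⟨hr.1, by linarith⟩
  have hev : (fun s => u (Int.fract s)) =ᶠ[𝓝 t] fun s => u (s - ⌊t⌋) := by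
    filter_upwards [Ioo_mem_nhds (show (⌊t⌋ : ℝ) - 1 < t by linarith [Int.floor_le t])
      (Int.lt_floor_add_one t)] with s hs
    rw [← Int.fract_sub_intCast s ⌊t⌋]
    exact hfract _ ⟨by linarith [hs.1], by linarith [hs.2]⟩
  have hderiv := (hu (Int.fract t) ⟨by linarith [Int.fract_nonneg t],
    by linarith [Int.fract_lt_one t]⟩).comp_sub_const t ⌊t⌋
  rw [hper.apply_fract] at hderiv
  exact hderiv.congr_of_eventuallyEq hev

end ODE

theorem mem_Icc_of_hasDerivAt_of_forall_lt {g : ℝ → ℝ → ℝ} {α β a b : ℝ} {u : ℝ → ℝ}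
    (hα : ∀ t, 0 < g t α) (hβ : ∀ t, g t β < 0)
    (hu : ∀ t ∈ Icc a b, HasDerivAt u (g t (u t)) t) (ha : u a ∈ Icc α β) :
    ∀ t ∈ Icc a b, u t ∈ Icc α β := by
  have hcont : ContinuousOn u (Icc a b) := fun t ht => (hu t ht).continuousAt.continuousWithinAt
  have hu' : ∀ t ∈ Ico a b, HasDerivWithinAt u (g t (u t)) (Ici t) t :=
    fun t ht => (hu t (Ico_subset_Icc_self ht)).hasDerivWithinAt
  intro t ht
  constructor
  · have := image_le_of_deriv_right_lt_deriv_boundary' hcont.neg (fun s hs => (hu' s hs).neg)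
      (B := fun _ => -α) (B' := fun _ => 0) (neg_le_neg ha.1) continuousOn_const
      (fun _ _ => hasDerivWithinAt_const _ _ _)
      (fun s _ hs => by rw [neg_inj.1 hs, neg_lt_zero]; exact hα s) ht
    exact neg_le_neg_iff.1 this
  · exact image_le_of_deriv_right_lt_deriv_boundary' hcont hu' (B := fun _ => β)
      (B' := fun _ => 0) ha.2 continuousOn_const (fun _ _ => hasDerivWithinAt_const _ _ _)
      (fun s _ hs => by rw [hs]; exact hβ s) ht

theorem exists_periodic_hasDerivAt_of_lipschitzWith {g : ℝ → ℝ → ℝ} {L : ℝ≥0} {C B : ℝ}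
    (hlip : ∀ t, LipschitzWith L (g t)) (hcont : ∀ x, Continuous (g · x))
    (hbdd : ∀ t x, |g t x| ≤ C) (hper : Periodic g 1) (hB : 0 ≤ B)
    (hgB : ∀ t, g t B < 0) (hgB' : ∀ t, 0 < g t (-B)) :
    ∃ u : ℝ → ℝ, Periodic u 1 ∧ (∀ t, u t ∈ Icc (-B) B) ∧ ∀ t, HasDerivAt u (g t (u t)) t := by
  obtain ⟨φ, hφ, hφcont⟩ := exists_flow_of_lipschitzWith hlip hcont hbdd 2 B.toNNReal
  have hball : closedBall (0 : ℝ) B.toNNReal = Icc (-B) B := by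
    rw [Real.coe_toNNReal B hB, Real.closedBall_eq_Icc, zero_sub, zero_add]
  rw [hball] at hφ hφcont
  have hsol : ∀ x ∈ Icc (-B) B, ∀ t ∈ Ioo (-1 : ℝ) 2, HasDerivAt (φ x) (g t (φ x t)) t :=
    fun x hx t ht => (hφ x hx).2 t ⟨by norm_num; linarith [ht.1], by norm_num; linarith [ht.2]⟩
  have hmem : ∀ x ∈ Icc (-B) B, ∀ t ∈ Icc (0 : ℝ) 1, φ x t ∈ Icc (-B) B := fun x hx =>
    mem_Icc_of_hasDerivAt_of_forall_lt hgB' hgB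
      (fun t ht => hsol x hx t ⟨by linarith [ht.1], by linarith [ht.2]⟩)
      ((hφ x hx).1.symm ▸ hx)
  obtain ⟨p, hp, hfix⟩ := exists_mem_Icc_isFixedPt_of_mapsTo (f := fun x => φ x 1)
    (hφcont 1 (by norm_num)) (by linarith) fun x hx => hmem x hx 1 (right_mem_Icc.2 zero_le_one)
  refine ⟨fun t => φ p (Int.fract t), (Int.fract_periodic ℝ).comp _,
    fun t => hmem p hp _ ⟨Int.fract_nonneg t, (Int.fract_lt_one t).le⟩,
    hasDerivAt_comp_fract hlip hper (hsol p hp) (hfix.trans (hφ p hp).1.symm)⟩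

/-- Clamping the state to `[-B, B]` makes the field globally Lipschitz and bounded without
changing it on the band, where the solutions stay. -/
theorem exists_periodic_hasDerivAt_of_lipschitzOnWith {g : ℝ → ℝ → ℝ} {L : ℝ≥0} {B : ℝ}
    (hB : 0 ≤ B) (hlip : ∀ t, LipschitzOnWith L (g t) (Icc (-B) B))
    (hcont : ∀ x, Continuous (g · x)) (hper : Periodic g 1)
    (hgB : ∀ t, g t B < 0) (hgB' : ∀ t, 0 < g t (-B)) :
    ∃ u : ℝ → ℝ, Periodic u 1 ∧ (∀ t, u t ∈ Icc (-B) B) ∧ ∀ t, HasDerivAt u (g t (u t)) t := by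
  have hBB : -B ≤ B := by linarith
  set π : ℝ → ℝ := fun x => projIcc (-B) B hBB x
  have hπ_lip : LipschitzWith 1 π := by
    have := (LipschitzWith.subtype_val _).comp (LipschitzWith.projIcc hBB)
    rwa [mul_one] at this
  have hπ_mem : ∀ x, π x ∈ Icc (-B) B := fun x => (projIcc (-B) B hBB x).2
  have hπ_eq : ∀ x ∈ Icc (-B) B, π x = x := fun x hx => congrArg Subtype.val (projIcc_of_mem hBB hx)
  have h0 : (0 : ℝ) ∈ Icc (-B) B := ⟨by linarith, hB⟩
  obtain ⟨M, hM⟩ := (show Periodic (g · 0) 1 from fun t => congrFun (hper t) 0)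
    |>.exists_forall_norm_le one_ne_zero (hcont 0)
  obtain ⟨u, hu_per, hu_mem, hu⟩ := exists_periodic_hasDerivAt_of_lipschitzWith
    (g := fun t x => g t (π x)) (C := M + L * B)
    (fun t => by
      have := (hlip t).comp (hπ_lip.lipschitzOnWith (s := univ)) fun x _ => hπ_mem x
      rwa [mul_one, lipschitzOnWith_univ] at this)
    (fun x => hcont (π x))
    (fun t x => by
      have hdist := (hlip t).dist_le_mul (π x) (hπ_mem x) 0 h0
      rw [Real.dist_eq, Real.dist_eq, sub_zero] at hdist
      calc |g t (π x)| ≤ |g t 0| + |g t (π x) - g t 0| := by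
            simpa using abs_add_le (g t 0) (g t (π x) - g t 0)
        _ ≤ M + L * B := add_le_add (hM t) (hdist.trans (by gcongr; exact abs_le.2 (hπ_mem x))))
    (fun t => funext fun x => congrFun (hper t) (π x)) hB
    (fun t => by simpa only [hπ_eq B (right_mem_Icc.2 hBB)] using hgB t)
    (fun t => by simpa only [hπ_eq (-B) (left_mem_Icc.2 hBB)] using hgB' t)
  exact ⟨u, hu_per, hu_mem, fun t => by simpa only [hπ_eq _ (hu_mem t)] using hu t⟩

section Nonlinearity

variable {f : ℝ → ℝ → ℝ}

theorem Nonlinearity.periodic (hf : Nonlinearity f) : Periodic f 1 := fun t => funext (hf.2 t)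

theorem Nonlinearity.continuous (hf : Nonlinearity f) : Continuous (uncurry f) := hf.1.continuous

theorem Nonlinearity.exists_lipschitzOnWith (hf : Nonlinearity f) {s : Set ℝ} (hs : Convex ℝ s)
    (hs' : IsCompact s) : ∃ L, ∀ t, LipschitzOnWith L (f t) s := by
  obtain ⟨L, hL⟩ := hf.1.contDiffOn.exists_lipschitzOnWith (by simp) ((convex_Icc 0 1).prod hs)
    (isCompact_Icc.prod hs')
  refine ⟨L, fun t => ?_⟩
  rw [← hf.periodic.apply_fract t]
  have := hL.comp (LipschitzWith.prodMk_left (Int.fract t)).lipschitzOnWith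
    fun x hx => ⟨⟨Int.fract_nonneg t, (Int.fract_lt_one t).le⟩, hx⟩
  rwa [mul_one] at this

theorem ProperNL.exists_forall_lt_abs (h : ProperNL f) (C : ℝ) :
    ∃ X, 0 ≤ X ∧ ∀ x, X ≤ |x| → ∀ t ∈ Icc (0 : ℝ) 1, C < |f t x| := by
  obtain ⟨X, hX⟩ :=
    eventually_atTop.1 (eventually_comap.1 (h.eventually (eventually_gt_atTop C)))
  refine ⟨max X 0, le_max_right _ _, fun x hx t ht =>
    (hX |x| (le_of_max_le_left hx) x rfl).trans_le ?_⟩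
  exact csInf_le ⟨0, forall_mem_image.2 fun _ _ => abs_nonneg _⟩ (mem_image_of_mem _ ht)

/-- For large `X`, `t ↦ f t X` avoids `[-C, C]`, so it keeps the sign it has at `t = 0`, which
monotonicity in `x` makes positive; symmetrically at `-X`. -/
theorem Nonlinearity.exists_barrier (hf : Nonlinearity f) (hproper : ProperNL f)
    (hmono : ∀ t, Monotone (f t)) (K : ℝ) : ∃ B, 0 ≤ B ∧ ∀ t, K < f t B ∧ f t (-B) < -K := by
  set C := max K |f 0 0|
  have hC : 0 ≤ C := (abs_nonneg _).trans (le_max_right _ _)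
  obtain ⟨X, hX, hlarge⟩ := hproper.exists_forall_lt_abs C
  have h0 : (0 : ℝ) ∈ Icc (0 : ℝ) 1 := left_mem_Icc.2 zero_le_one
  have hcont : ∀ x, ContinuousOn (fun t => f t x) (Icc 0 1) :=
    fun x => (hf.continuous.uncurry_right x).continuousOn
  have hX' : X ≤ |X| := le_abs_self X
  have hmX' : X ≤ |-X| := (le_abs_self X).trans_eq (abs_neg X).symm
  have hf00 : -C ≤ f 0 0 ∧ f 0 0 ≤ C := abs_le.1 (le_max_right _ _)
  have hup := isPreconnected_Icc.forall_lt_of_lt_abs (hcont X) hC (hlarge X hX') h0 (by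
    rcases lt_abs.1 (hlarge X hX' 0 h0) with h | h
    · exact h
    · linarith [hmono 0 hX])
  have hdown := isPreconnected_Icc.forall_lt_of_lt_abs (φ := fun t => -f t (-X)) (hcont (-X)).neg hC
    (fun t ht => (hlarge (-X) hmX' t ht).trans_eq (abs_neg _).symm) h0 (by
      rcases lt_abs.1 (hlarge (-X) hmX' 0 h0) with h | h
      · linarith [hmono 0 (neg_nonpos.2 hX)]
      · exact h)
  have hfract : ∀ t, Int.fract t ∈ Icc (0 : ℝ) 1 :=
    fun t => ⟨Int.fract_nonneg t, (Int.fract_lt_one t).le⟩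
  refine ⟨X, hX, fun t => ⟨?_, ?_⟩⟩
  · rw [← hf.periodic.apply_fract t]
    linarith [hup _ (hfract t), le_max_left K |f 0 0|]
  · rw [← hf.periodic.apply_fract t]
    linarith [hdown _ (hfract t), le_max_left K |f 0 0|]

end Nonlinearity

theorem IsPeriodicSol.hasDerivAt {f : ℝ → ℝ → ℝ} {v u : ℝ → ℝ} (hu : IsPeriodicSol f v u)
    (t : ℝ) : HasDerivAt u (v t - f t (u t)) t := by
  rw [← hu.2.2 t, add_sub_cancel_right]
  exact (hu.1.differentiable one_ne_zero t).hasDerivAt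

theorem isPeriodicSol_of_hasDerivAt {f : ℝ → ℝ → ℝ} {v u : ℝ → ℝ}
    (hf : Continuous (uncurry f)) (hv : Continuous v) (hper : Periodic u 1)
    (hu : ∀ t, HasDerivAt u (v t - f t (u t)) t) : IsPeriodicSol f v u := by
  have hdiff : Differentiable ℝ u := fun t => (hu t).differentiableAt
  have hderiv : deriv u = fun t => v t - f t (u t) := funext fun t => (hu t).deriv
  refine ⟨contDiff_one_iff_deriv.2 ⟨hdiff, ?_⟩, hper, fun t => by rw [hderiv]; ring⟩
  rw [hderiv]
  exact hv.sub (hf.comp (continuous_id.prodMk hdiff.continuous))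

/-- **Proposition 4.1(c)** (solution level). If `f` is a proper nonlinearity
which is strictly increasing in the second variable (its derivative `D₂f` may
vanish), then for every continuous 1-periodic `v` the equation
`u' + f(t,u) = v` has exactly one periodic solution. -/
theorem stmt12 (f : ℝ → ℝ → ℝ) (hf : Nonlinearity f) (hproper : ProperNL f)
    (hmono : ∀ t, StrictMono (f t))
    (v : ℝ → ℝ) (hv : Continuous v) (hvper : Periodic1 v) :
    ∃! u : ℝ → ℝ, IsPeriodicSol f v u := by
  obtain ⟨K, hK⟩ := (show Periodic v 1 from hvper).exists_forall_norm_le one_ne_zero hv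
  obtain ⟨B, hB, hfB⟩ := hf.exists_barrier hproper (fun t => (hmono t).monotone) K
  obtain ⟨L, hL⟩ := hf.exists_lipschitzOnWith (convex_Icc (-B) B) isCompact_Icc
  obtain ⟨u, hu_per, -, hu⟩ :=
    exists_periodic_hasDerivAt_of_lipschitzOnWith (g := fun t x => v t - f t x) hB
      (fun t => LipschitzOnWith.of_dist_le_mul fun x hx y hy => by
        rw [dist_sub_left]; exact (hL t).dist_le_mul x hx y hy)
      (fun x => hv.sub (hf.continuous.uncurry_right x))
      (fun t => funext fun x => by simp only [hvper t, hf.2 t x])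
      (fun t => by linarith [(hfB t).1, le_abs_self (v t), hK t, Real.norm_eq_abs (v t)])
      (fun t => by linarith [(hfB t).2, neg_abs_le (v t), hK t, Real.norm_eq_abs (v t)])
  have hanti : ∀ t, StrictAnti fun x => v t - f t x :=
    fun t _ _ hxy => sub_lt_sub_left (hmono t hxy) _
  refine ⟨u, isPeriodicSol_of_hasDerivAt hf.continuous hv hu_per hu, fun w hw => le_antisymm ?_ ?_⟩
  · exact Periodic.le_of_hasDerivAt_of_strictAnti hanti one_ne_zero hw.2.1 hu_per hw.hasDerivAt hu
  · exact Periodic.le_of_hasDerivAt_of_strictAnti hanti one_ne_zero hu_per hw.2.1 hu hw.hasDerivAt
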